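/- Let H be a finite simple graph, with at least one edge, that is both vertex-transitive and edge-transitive, let G be a finite simple graph equipped with an H-partition ⨆_{u ∈ V(H)} V_u, and let X, Y be real symmetric positive semidefinite matrices with rows and columns indexed by V(G). If XY = 0 and X_[u,v] = Y_[u,v] for every ordered pair (u,v) of vertices of H with {u,v} ∉ E(H) (including u = v), then ‖X‖² ≤ (λ_max(H)/|λ_min(H)|) · ‖Y‖². -/

import Mathlib

open Matrix Finset

namespace SpectralFrac

variable {V : Type*}

/-- The real adjacency matrix of a simple graph is Hermitian. -/
theorem adjMatrix_isHermitian [Fintype V] [DecidableEq V] (G : SimpleGraph V)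
    [DecidableRel G.Adj] : (G.adjMatrix ℝ).IsHermitian := by
  rw [Matrix.IsHermitian, Matrix.conjTranspose_eq_transpose_of_trivial]
  exact G.isSymm_adjMatrix

/-- `s⁺(G)`: the sum of the squares of the positive eigenvalues of the adjacency matrix. -/
noncomputable def sPos [Fintype V] [DecidableEq V] (G : SimpleGraph V) [DecidableRel G.Adj] : ℝ :=
  ∑ i, if 0 < (adjMatrix_isHermitian G).eigenvalues i
    then ((adjMatrix_isHermitian G).eigenvalues i) ^ 2 else 0

/-- `s⁻(G)`: the sum of the squares of the negative eigenvalues of the adjacency matrix. -/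
noncomputable def sNeg [Fintype V] [DecidableEq V] (G : SimpleGraph V) [DecidableRel G.Adj] : ℝ :=
  ∑ i, if (adjMatrix_isHermitian G).eigenvalues i < 0
    then ((adjMatrix_isHermitian G).eigenvalues i) ^ 2 else 0

/-- The largest eigenvalue of the adjacency matrix of `G`. -/
noncomputable def lamMax [Fintype V] [DecidableEq V] (G : SimpleGraph V) [DecidableRel G.Adj] : ℝ :=
  ⨆ i, (adjMatrix_isHermitian G).eigenvalues i

/-- The smallest eigenvalue of the adjacency matrix of `G`. -/
noncomputable def lamMin [Fintype V] [DecidableEq V] (G : SimpleGraph V) [DecidableRel G.Adj] : ℝ :=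
  ⨅ i, (adjMatrix_isHermitian G).eigenvalues i

/-- A graph is edge-transitive if its automorphism group acts transitively on edges. -/
def IsEdgeTransitive (H : SimpleGraph V) : Prop :=
  ∀ ⦃u v x y : V⦄, H.Adj u v → H.Adj x y → ∃ π : H ≃g H, s(π u, π v) = s(x, y)

/-- A graph is vertex-transitive if its automorphism group acts transitively on vertices. -/
def IsVertexTransitive (H : SimpleGraph V) : Prop :=
  ∀ u v : V, ∃ π : H ≃g H, π u = v

/-- The Kneser graph `K_{n;k}`: vertices are `k`-subsets of an `n`-set, adjacent iff disjoint. -/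
def kneserGraph (n k : ℕ) : SimpleGraph {s : Finset (Fin n) // s.card = k} where
  Adj a b := a ≠ b ∧ Disjoint a.1 b.1
  symm := ⟨fun a b h => ⟨h.1.symm, h.2.symm⟩⟩
  loopless := ⟨fun a h => h.1 rfl⟩

instance kneserGraph.adjDecidable (n k : ℕ) : DecidableRel (kneserGraph n k).Adj :=
  fun a b => inferInstanceAs (Decidable (a ≠ b ∧ Disjoint a.1 b.1))

/-- The fractional chromatic number: the infimum of `n / k` over all pairs `(n, k)` such that
`G` admits a homomorphism into the Kneser graph `K_{n;k}`. -/
noncomputable def fracChromaticNumber (G : SimpleGraph V) : ℝ :=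
  sInf {q : ℝ | ∃ n k : ℕ, 0 < k ∧ Nonempty (G →g kneserGraph n k) ∧ q = (n : ℝ) / k}

/-- The automorphism group of `H`, as a finset of permutations of the vertices. -/
def autSet [Fintype V] [DecidableEq V] (H : SimpleGraph V) [DecidableRel H.Adj] :
    Finset (Equiv.Perm V) :=
  Finset.univ.filter fun π => ∀ u v, H.Adj (π u) (π v) ↔ H.Adj u v

end SpectralFrac

/-!
Let `E` be the set of pairs `(a, b)` of vertices of `G` whose parts `P a`, `P b` are adjacent in
`H`, and let `e`, `c` be the squared mass of `X` on `E` and off `E`. Take an eigenvector `ψ` of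
`H` for `λ_min` and average `ψ ψᵀ` over `Aut H`: the resulting kernel `T` is positive semidefinite,
has a constant diagonal `d` (vertex-transitivity), is bounded by `d`, and takes a constant value
`τ` on the edges (edge-transitivity); since every `ψ ∘ π` is again a `λ_min`-eigenvector,
`2|E(H)| τ = λ_min |V(H)| d`. By the Schur product theorem `∑ X_ab² T(P a, P b) ≥ 0`, so
`τ e + d c ≥ 0`, and with `2|E(H)| ≤ λ_max |V(H)|` this gives `|λ_min| e ≤ λ_max c`.

On the other hand `XY = 0` makes `X` and `Y` orthogonal, and they agree off `E`; Cauchy–Schwarz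
on `E` then gives `c (‖X‖² + ‖Y‖²) ≤ ‖X‖² ‖Y‖²`. Eliminating `c` yields the claim.
-/

namespace Matrix.IsHermitian

variable {n : Type*} [Fintype n] [DecidableEq n] {A : Matrix n n ℝ}

theorem posSemidef_smul_one_sub (hA : A.IsHermitian) {c : ℝ} (hc : ∀ i, hA.eigenvalues i ≤ c) :
    (c • 1 - A).PosSemidef := by
  set U : Matrix n n ℝ := ↑hA.eigenvectorUnitary
  have hU : U * star U = 1 := Unitary.mul_star_self_of_mem hA.eigenvectorUnitary.2
  have hconj : c • 1 - A = U * diagonal (fun i => c - hA.eigenvalues i) * star U := by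
    conv_lhs => rw [hA.spectral_theorem, Unitary.conjStarAlgAut_apply]
    rw [← diagonal_sub, ← smul_one_eq_diagonal, mul_sub, sub_mul, mul_smul_comm, smul_mul_assoc,
      mul_one, hU]
    rfl
  rw [hconj, Unitary.isUnit_coe.posSemidef_star_right_conjugate_iff, posSemidef_diagonal_iff]
  exact fun i => sub_nonneg.mpr (hc i)

theorem dotProduct_mulVec_le_iSup_eigenvalues_mul [Nonempty n] (hA : A.IsHermitian) (v : n → ℝ) :
    v ⬝ᵥ (A *ᵥ v) ≤ (⨆ i, hA.eigenvalues i) * (v ⬝ᵥ v) := by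
  have := (hA.posSemidef_smul_one_sub fun i => le_ciSup (Finite.bddAbove_range _) i)
    |>.dotProduct_mulVec_nonneg v
  simpa [sub_mulVec, smul_mulVec, one_mulVec, dotProduct_sub, dotProduct_smul] using this

theorem exists_mulVec_eq_iInf_eigenvalues_smul [Nonempty n] (hA : A.IsHermitian) :
    ∃ ψ : n → ℝ, ψ ≠ 0 ∧ A *ᵥ ψ = (⨅ i, hA.eigenvalues i) • ψ := by
  obtain ⟨i, hi⟩ := exists_eq_ciInf_of_finite (f := hA.eigenvalues)
  refine ⟨hA.eigenvectorBasis i, fun h => ?_, hi ▸ hA.mulVec_eigenvectorBasis i⟩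
  exact hA.eigenvectorBasis.orthonormal.ne_zero i (WithLp.ofLp_injective 2 h)

end Matrix.IsHermitian

namespace Matrix.PosSemidef

theorem sum_apply_nonneg {n : Type*} [Fintype n] {M : Matrix n n ℝ} (hM : M.PosSemidef) :
    0 ≤ ∑ i, ∑ j, M i j := by
  simpa [dotProduct, mulVec, Finset.sum_comm (γ := n)] using hM.dotProduct_mulVec_nonneg 1

theorem sum_sq_mul_submatrix_nonneg {m n : Type*} [Fintype m] {X : Matrix m m ℝ}
    {T : Matrix n n ℝ} (hX : X.PosSemidef) (hT : T.PosSemidef) (P : m → n) :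
    0 ≤ ∑ a, ∑ b, X a b ^ 2 * T (P a) (P b) := by
  simpa [sq] using ((hX.hadamard hX).hadamard (hT.submatrix P)).sum_apply_nonneg

end Matrix.PosSemidef

theorem Finset.sum_compl_sq_mul_le {ι : Type*} [Fintype ι] [DecidableEq ι] (s : Finset ι)
    {x y : ι → ℝ} (hxy : ∀ i ∉ s, x i = y i) (horth : ∑ i, x i * y i = 0) :
    (∑ i ∈ sᶜ, x i ^ 2) * (∑ i, x i ^ 2 + ∑ i, y i ^ 2) ≤ (∑ i, x i ^ 2) * ∑ i, y i ^ 2 := by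
  have hxy' : ∑ i ∈ sᶜ, x i * y i = ∑ i ∈ sᶜ, x i ^ 2 :=
    sum_congr rfl fun i hi => by rw [← hxy i (mem_compl.1 hi), sq]
  have hyy : ∑ i ∈ sᶜ, y i ^ 2 = ∑ i ∈ sᶜ, x i ^ 2 :=
    sum_congr rfl fun i hi => by rw [← hxy i (mem_compl.1 hi)]
  have hcs := sum_mul_sq_le_sq_mul_sq s x y
  rw [← sum_add_sum_compl s, hxy', add_eq_zero_iff_eq_neg] at horth
  rw [horth, neg_sq] at hcs
  rw [← sum_add_sum_compl s (fun i => x i ^ 2), ← sum_add_sum_compl s (fun i => y i ^ 2), hyy]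
  linarith

theorem le_div_mul_of_sq_bounds {L Λ x y t : ℝ} (hL : 0 < L) (hΛ : 0 ≤ Λ) (hx : 0 ≤ x)
    (hy : 0 ≤ y) (hcs : t * (x + y) ≤ x * y) (hedge : L * (x - t) ≤ Λ * t) : x ≤ Λ / L * y := by
  rw [div_mul_eq_mul_div, le_div_iff₀ hL, mul_comm]
  rcases hx.eq_or_lt with rfl | hx
  · simpa using mul_nonneg hΛ hy
  · have : x * (L * x) ≤ x * (Λ * y) := by nlinarith
    exact le_of_mul_le_mul_left this hx

theorem Matrix.sum_apply_mul_apply_eq_zero {n : Type*} [Fintype n] {X Y : Matrix n n ℝ}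
    (hY : Y.IsHermitian) (hXY : X * Y = 0) : ∑ a, ∑ b, X a b * Y a b = 0 := by
  calc ∑ a, ∑ b, X a b * Y a b = (X * Y).trace := by
        simp only [trace, diag, mul_apply]
        refine sum_congr rfl fun a _ => sum_congr rfl fun b _ => ?_
        rw [← hY.apply b a, star_trivial]
    _ = 0 := by rw [hXY, trace_zero]

namespace SpectralFrac

section Spectrum

variable {W : Type*} [Fintype W] [DecidableEq W] {H : SimpleGraph W} [DecidableRel H.Adj]

theorem sum_eigenvalues_adjMatrix : ∑ i, (adjMatrix_isHermitian H).eigenvalues i = 0 := by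
  exact_mod_cast (adjMatrix_isHermitian H).trace_eq_sum_eigenvalues.symm.trans
    (H.trace_adjMatrix (α := ℝ))

theorem eigenvalues_adjMatrix_ne_zero (hH : H.edgeSet.Nonempty) :
    (adjMatrix_isHermitian H).eigenvalues ≠ 0 := by
  rw [Ne, (adjMatrix_isHermitian H).eigenvalues_eq_zero_iff]
  obtain ⟨⟨u, v⟩, huv⟩ := hH
  exact fun h => (by simpa using congr_fun₂ h u v : ¬ H.Adj u v) huv

theorem lamMin_neg (hH : H.edgeSet.Nonempty) : lamMin H < 0 := by
  have : Nonempty W := ⟨hH.some.out.1⟩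
  by_contra! h
  have hnonneg i : 0 ≤ (adjMatrix_isHermitian H).eigenvalues i :=
    h.trans (ciInf_le (Finite.bddBelow_range _) i)
  refine eigenvalues_adjMatrix_ne_zero hH (funext fun i => ?_)
  exact (sum_eq_zero_iff_of_nonneg fun i _ => hnonneg i).1 sum_eigenvalues_adjMatrix i (mem_univ i)

theorem lamMax_pos (hH : H.edgeSet.Nonempty) : 0 < lamMax H := by
  have : Nonempty W := ⟨hH.some.out.1⟩
  by_contra! h
  have hnonpos i : (adjMatrix_isHermitian H).eigenvalues i ≤ 0 :=
    (le_ciSup (Finite.bddAbove_range _) i).trans h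
  refine eigenvalues_adjMatrix_ne_zero hH (funext fun i => ?_)
  exact (sum_eq_zero_iff_of_nonpos fun i _ => hnonpos i).1 sum_eigenvalues_adjMatrix i (mem_univ i)

theorem sum_adjMatrix_le_lamMax_mul_card [Nonempty W] :
    ∑ u, ∑ v, H.adjMatrix ℝ u v ≤ lamMax H * Fintype.card W := by
  simpa [lamMax, dotProduct, mulVec] using
    (adjMatrix_isHermitian H).dotProduct_mulVec_le_iSup_eigenvalues_mul (fun _ => 1)

theorem mem_autSet_iff {π : Equiv.Perm W} :
    π ∈ autSet H ↔ ∀ u v, H.Adj (π u) (π v) ↔ H.Adj u v := by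
  simp [autSet]

theorem toEquiv_mem_autSet (f : H ≃g H) : (f.toEquiv : Equiv.Perm W) ∈ autSet H :=
  mem_autSet_iff.mpr fun _ _ => f.map_adj_iff

theorem one_mem_autSet : (1 : Equiv.Perm W) ∈ autSet H :=
  mem_autSet_iff.mpr fun _ _ => Iff.rfl

theorem mul_mem_autSet_iff {π σ : Equiv.Perm W} (hσ : σ ∈ autSet H) :
    π * σ ∈ autSet H ↔ π ∈ autSet H := by
  simp only [mem_autSet_iff, Equiv.Perm.mul_apply] at hσ ⊢
  refine ⟨fun h u v => ?_, fun h u v => (h _ _).trans (hσ u v)⟩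
  simpa using (h (σ.symm u) (σ.symm v)).trans (hσ _ _).symm

theorem adjMatrix_mulVec_comp_of_mem_autSet {π : Equiv.Perm W} (hπ : π ∈ autSet H)
    (ψ : W → ℝ) : H.adjMatrix ℝ *ᵥ (ψ ∘ π) = (H.adjMatrix ℝ *ᵥ ψ) ∘ π := by
  ext u
  simp only [mulVec, dotProduct, Function.comp_apply]
  conv_rhs => rw [← Equiv.sum_comp π]
  simp [SimpleGraph.adjMatrix_apply, mem_autSet_iff.mp hπ]

variable (H) in
noncomputable def autKernel (ψ : W → ℝ) : Matrix W W ℝ :=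
  ∑ π ∈ autSet H, vecMulVec (ψ ∘ π) (ψ ∘ π)

variable {ψ : W → ℝ}

theorem autKernel_apply (u v : W) : autKernel H ψ u v = ∑ π ∈ autSet H, ψ (π u) * ψ (π v) := by
  simp [autKernel, Matrix.sum_apply, vecMulVec_apply]

theorem autKernel_apply_comm (u v : W) : autKernel H ψ u v = autKernel H ψ v u := by
  simp only [autKernel_apply, mul_comm]

theorem autKernel_posSemidef : (autKernel H ψ).PosSemidef :=
  posSemidef_sum _ fun π _ => by simpa using posSemidef_vecMulVec_self_star (ψ ∘ π)

theorem autKernel_apply_perm {σ : Equiv.Perm W} (hσ : σ ∈ autSet H) (u v : W) :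
    autKernel H ψ (σ u) (σ v) = autKernel H ψ u v := by
  simp only [autKernel_apply, ← Equiv.Perm.mul_apply]
  exact sum_equiv (Equiv.mulRight σ) (fun π => (mul_mem_autSet_iff hσ).symm) fun _ _ => rfl

theorem autKernel_apply_eq_of_adj (het : IsEdgeTransitive H) {u v x y : W} (huv : H.Adj u v)
    (hxy : H.Adj x y) : autKernel H ψ u v = autKernel H ψ x y := by
  obtain ⟨f, hf⟩ := het huv hxy
  rw [← autKernel_apply_perm (toEquiv_mem_autSet f)]
  rcases Sym2.eq_iff.mp hf with ⟨hx, hy⟩ | ⟨hy, hx⟩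
  · simp [hx, hy]
  · simp [hx, hy, autKernel_apply_comm y]

theorem autKernel_apply_self_eq (hvt : IsVertexTransitive H) (u v : W) :
    autKernel H ψ u u = autKernel H ψ v v := by
  obtain ⟨f, rfl⟩ := hvt u v
  exact (autKernel_apply_perm (toEquiv_mem_autSet f) u u).symm

theorem two_mul_autKernel_apply_le (u v : W) :
    2 * autKernel H ψ u v ≤ autKernel H ψ u u + autKernel H ψ v v := by
  simp only [autKernel_apply, mul_sum, ← sum_add_distrib]
  exact sum_le_sum fun π _ => by linarith [two_mul_le_add_sq (ψ (π u)) (ψ (π v))]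

theorem trace_autKernel : (autKernel H ψ).trace = (autSet H).card * (ψ ⬝ᵥ ψ) := by
  simp [autKernel, trace_sum, trace_vecMulVec]

theorem sum_adjMatrix_mul_autKernel {μ : ℝ} (hψ : H.adjMatrix ℝ *ᵥ ψ = μ • ψ) :
    ∑ u, ∑ v, H.adjMatrix ℝ u v * autKernel H ψ u v = μ * (autKernel H ψ).trace := by
  have hquad (φ : W → ℝ) :
      ∑ u, ∑ v, H.adjMatrix ℝ u v * vecMulVec φ φ u v = φ ⬝ᵥ (H.adjMatrix ℝ *ᵥ φ) := by
    simp only [vecMulVec_apply, dotProduct, mulVec, mul_sum]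
    exact sum_congr rfl fun u _ => sum_congr rfl fun v _ => by ring
  have heig {π : Equiv.Perm W} (hπ : π ∈ autSet H) :
      H.adjMatrix ℝ *ᵥ (ψ ∘ π) = μ • (ψ ∘ π) := by
    rw [adjMatrix_mulVec_comp_of_mem_autSet hπ, hψ]
    rfl
  calc ∑ u, ∑ v, H.adjMatrix ℝ u v * autKernel H ψ u v
      = ∑ π ∈ autSet H, ∑ u, ∑ v, H.adjMatrix ℝ u v * vecMulVec (ψ ∘ π) (ψ ∘ π) u v := by
        simp only [autKernel, Matrix.sum_apply, mul_sum]
        exact (sum_congr rfl fun u _ => sum_comm).trans sum_comm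
    _ = ∑ π ∈ autSet H, μ * (ψ ⬝ᵥ ψ) := by
        refine sum_congr rfl fun π hπ => ?_
        rw [hquad, heig hπ, dotProduct_smul, smul_eq_mul]
        simp
    _ = μ * (autKernel H ψ).trace := by
        rw [trace_autKernel, sum_const, nsmul_eq_mul]
        ring

theorem exists_posSemidef_kernel (hH : H.edgeSet.Nonempty) (hvt : IsVertexTransitive H)
    (het : IsEdgeTransitive H) :
    ∃ T : Matrix W W ℝ, T.PosSemidef ∧ ∃ d τ : ℝ, 0 < d ∧ (∀ u v, T u v ≤ d) ∧
      (∀ u v, H.Adj u v → T u v = τ) ∧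
      τ * ∑ u, ∑ v, H.adjMatrix ℝ u v = lamMin H * (Fintype.card W * d) := by
  obtain ⟨⟨u₀, v₀⟩, h₀ : H.Adj u₀ v₀⟩ := hH
  have : Nonempty W := ⟨u₀⟩
  obtain ⟨ψ, hψ0, hψ⟩ := (adjMatrix_isHermitian H).exists_mulVec_eq_iInf_eigenvalues_smul
  have hdiag u : autKernel H ψ u u = autKernel H ψ u₀ u₀ := autKernel_apply_self_eq hvt u u₀
  have htrace : (autKernel H ψ).trace = Fintype.card W * autKernel H ψ u₀ u₀ := by
    simp [trace, hdiag]
  refine ⟨autKernel H ψ, autKernel_posSemidef, autKernel H ψ u₀ u₀, autKernel H ψ u₀ v₀,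
    ?_, fun u v => ?_, fun u v huv => autKernel_apply_eq_of_adj het huv h₀, ?_⟩
  · have : 0 < (autKernel H ψ).trace := by
      rw [trace_autKernel]
      exact mul_pos (Nat.cast_pos.mpr (card_pos.mpr ⟨1, one_mem_autSet⟩))
        (lt_of_le_of_ne (by simpa using dotProduct_star_self_nonneg ψ)
          (Ne.symm (mt dotProduct_self_eq_zero.mp hψ0)))
    rw [htrace] at this
    exact pos_of_mul_pos_right this (Nat.cast_nonneg _)
  · linarith [two_mul_autKernel_apply_le (H := H) (ψ := ψ) u v, hdiag u, hdiag v]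
  · rw [← htrace, ← sum_adjMatrix_mul_autKernel (μ := lamMin H) hψ, mul_sum]
    refine sum_congr rfl fun u _ => ?_
    rw [mul_sum]
    refine sum_congr rfl fun v _ => ?_
    by_cases huv : H.Adj u v
    · simp [huv, autKernel_apply_eq_of_adj het huv h₀]
    · simp [huv]

end Spectrum

section EdgeBlocks

variable {VG W : Type*} [Fintype VG] {H : SimpleGraph W} [DecidableRel H.Adj]

variable (H) in
def edgeBlocks (P : VG → W) : Finset (VG × VG) :=
  univ.filter fun p => H.Adj (P p.1) (P p.2)

variable [DecidableEq VG]

theorem edgeBlocks_kernel_nonneg {T : Matrix W W ℝ} (hT : T.PosSemidef) {d τ : ℝ}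
    (hle : ∀ u v, T u v ≤ d) (hτ : ∀ u v, H.Adj u v → T u v = τ) (P : VG → W)
    {X : Matrix VG VG ℝ} (hX : X.PosSemidef) :
    0 ≤ τ * ∑ p ∈ edgeBlocks H P, X p.1 p.2 ^ 2 + d * ∑ p ∈ (edgeBlocks H P)ᶜ, X p.1 p.2 ^ 2 := by
  calc 0 ≤ ∑ a, ∑ b, X a b ^ 2 * T (P a) (P b) := hX.sum_sq_mul_submatrix_nonneg hT P
    _ = ∑ p ∈ edgeBlocks H P, X p.1 p.2 ^ 2 * T (P p.1) (P p.2) +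
        ∑ p ∈ (edgeBlocks H P)ᶜ, X p.1 p.2 ^ 2 * T (P p.1) (P p.2) := by
      rw [sum_add_sum_compl, Fintype.sum_prod_type]
    _ ≤ _ := by
      rw [mul_sum, mul_sum]
      refine add_le_add (sum_congr rfl fun p hp => ?_).le (sum_le_sum fun p _ => ?_)
      · rw [hτ _ _ (mem_filter.mp hp).2, mul_comm]
      · rw [mul_comm]
        exact mul_le_mul_of_nonneg_right (hle _ _) (sq_nonneg _)

theorem neg_lamMin_mul_sum_edgeBlocks_le [Fintype W] [DecidableEq W] (hH : H.edgeSet.Nonempty)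
    (hvt : IsVertexTransitive H) (het : IsEdgeTransitive H) (P : VG → W) {X : Matrix VG VG ℝ} (hX : X.PosSemidef) :
    -lamMin H * ∑ p ∈ edgeBlocks H P, X p.1 p.2 ^ 2 ≤
      lamMax H * ∑ p ∈ (edgeBlocks H P)ᶜ, X p.1 p.2 ^ 2 := by
  have : Nonempty W := ⟨hH.some.out.1⟩
  obtain ⟨T, hT, d, τ, hd, hle, hτ, hτd⟩ := exists_posSemidef_kernel hH hvt het
  have hkernel := edgeBlocks_kernel_nonneg hT hle hτ P hX
  set e := ∑ p ∈ edgeBlocks H P, X p.1 p.2 ^ 2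
  set c := ∑ p ∈ (edgeBlocks H P)ᶜ, X p.1 p.2 ^ 2
  set m := ∑ u, ∑ v, H.adjMatrix ℝ u v
  have hc : 0 ≤ c := sum_nonneg fun _ _ => sq_nonneg _
  have hm : 0 ≤ m := sum_nonneg fun u _ => sum_nonneg fun v _ => by
    rw [SimpleGraph.adjMatrix_apply]; split_ifs <;> norm_num
  have hnd : 0 < Fintype.card W * d := mul_pos (Nat.cast_pos.mpr Fintype.card_pos) hd
  have : 0 ≤ (Fintype.card W * d) * (lamMin H * e + lamMax H * c) :=
    calc 0 ≤ m * (τ * e + d * c) := mul_nonneg hm hkernel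
      _ = lamMin H * (Fintype.card W * d) * e + m * (d * c) := by linear_combination e * hτd
      _ ≤ lamMin H * (Fintype.card W * d) * e + lamMax H * Fintype.card W * (d * c) := by
        have := mul_le_mul_of_nonneg_right (sum_adjMatrix_le_lamMax_mul_card (H := H))
          (mul_nonneg hd.le hc)
        linarith
      _ = (Fintype.card W * d) * (lamMin H * e + lamMax H * c) := by ring
  linarith [(mul_nonneg_iff_of_pos_left hnd).mp this]

end EdgeBlocks

end SpectralFrac

theorem SpectralFrac.frobenius_le_of_conformal_general {VG W : Type*} [Fintype VG]
    [Fintype W] [DecidableEq W]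
    (H : SimpleGraph W) [DecidableRel H.Adj]
    (hHe : H.edgeSet.Nonempty) (hvt : IsVertexTransitive H) (het : IsEdgeTransitive H)
    (P : VG → W) (X Y : Matrix VG VG ℝ) (hX : X.PosSemidef) (hY : Y.PosSemidef)
    (hXY : X * Y = 0)
    (hblocks : ∀ u v : W, ¬ H.Adj u v → ∀ a b : VG, P a = u → P b = v → X a b = Y a b) :
    ∑ a, ∑ b, (X a b) ^ 2 ≤ (lamMax H / |lamMin H|) * ∑ a, ∑ b, (Y a b) ^ 2 := by
  classical
  have horth : ∑ p : VG × VG, X p.1 p.2 * Y p.1 p.2 = 0 := by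
    rw [Fintype.sum_prod_type]
    exact sum_apply_mul_apply_eq_zero hY.isHermitian hXY
  have hoff : ∀ p ∉ edgeBlocks H P, X p.1 p.2 = Y p.1 p.2 := fun p hp =>
    hblocks _ _ (by simpa [edgeBlocks] using hp) _ _ rfl rfl
  have hcs := sum_compl_sq_mul_le (edgeBlocks H P) hoff horth
  have hedge := neg_lamMin_mul_sum_edgeBlocks_le hHe hvt het P hX
  rw [← sum_add_sum_compl (edgeBlocks H P) (fun p => X p.1 p.2 ^ 2)] at hcs
  rw [abs_of_neg (lamMin_neg hHe), ← Fintype.sum_prod_type (fun p => X p.1 p.2 ^ 2),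
    ← Fintype.sum_prod_type (fun p => Y p.1 p.2 ^ 2), ← sum_add_sum_compl (edgeBlocks H P)]
  exact le_div_mul_of_sq_bounds (neg_pos.mpr (lamMin_neg hHe)) (lamMax_pos hHe).le
    (add_nonneg (sum_nonneg fun _ _ => sq_nonneg _) (sum_nonneg fun _ _ => sq_nonneg _))
    (sum_nonneg fun _ _ => sq_nonneg _) hcs (by linarith)

/-- **Lemma.** If `H` is vertex- and edge-transitive with at least one edge, `G` has an
`H`-partition (given by `P`), `X, Y` are real symmetric PSD matrices indexed by `V(G)` with
`XY = 0` and `X_[u,v] = Y_[u,v]` whenever `{u,v} ∉ E(H)`, then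
`‖X‖² ≤ (λ_max(H)/|λ_min(H)|) · ‖Y‖²`. -/
theorem SpectralFrac.frobenius_le_of_conformal {VG W : Type*} [Fintype VG]
    [Fintype W] [DecidableEq W]
    (H : SimpleGraph W) [DecidableRel H.Adj] (G : SimpleGraph VG)
    (hHe : H.edgeSet.Nonempty) (hvt : IsVertexTransitive H) (het : IsEdgeTransitive H)
    (P : VG → W) (X Y : Matrix VG VG ℝ) (hX : X.PosSemidef) (hY : Y.PosSemidef)
    (hXY : X * Y = 0)
    (hblocks : ∀ u v : W, ¬ H.Adj u v → ∀ a b : VG, P a = u → P b = v → X a b = Y a b) :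
    ∑ a, ∑ b, (X a b) ^ 2 ≤ (lamMax H / |lamMin H|) * ∑ a, ∑ b, (Y a b) ^ 2 :=
  SpectralFrac.frobenius_le_of_conformal_general H hHe hvt het P X Y hX hY hXY hblocks
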